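/- Merging robust fair clusters preserves robust fairness: if clusters C_1,...,C_t (pairwise disjoint, each nonempty) each satisfy the robust fairness bounds (|C_{i,h}| + m_h^+)/|C_i| ≤ u_h and (|C_{i,h}| - m_h^-)/|C_i| ≥ l_h for every color h, then their union C = C_1 ∪ ... ∪ C_t satisfies (|C_h| + m_h^+)/|C| ≤ u_h and (|C_h| - m_h^-)/|C| ≥ l_h, where C_h = C_{1,h} ∪ ... ∪ C_{t,h}. -/

import Mathlib

/-!
Clearing denominators, cluster `i` satisfies `|C_{i,h}| + m⁺ ≤ u |C_i|`. Summing over the `t`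
clusters, and using disjointness to turn the sums of cardinalities into cardinalities of unions,
gives `|C_h| + t m⁺ ≤ u |C|`; since `t ≥ 1` and `m⁺ ≥ 0`, the single slack `m⁺` is dominated by
`t m⁺`. The lower bound is the same argument with `-m⁻`.
-/

open Finset

section Mediant

variable {ι : Type*} {s : Finset ι} {a b : ι → ℝ} {m : ℝ}

lemma sum_add_div_sum_le_of_forall_add_div_le {u : ℝ} (hs : s.Nonempty) (hm : 0 ≤ m)
    (hb : ∀ i ∈ s, 0 < b i) (h : ∀ i ∈ s, (a i + m) / b i ≤ u) :
    (∑ i ∈ s, a i + m) / ∑ i ∈ s, b i ≤ u := by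
  rw [div_le_iff₀ (sum_pos hb hs)]
  have hsum : ∑ i ∈ s, (a i + m) ≤ ∑ i ∈ s, u * b i :=
    sum_le_sum fun i hi => (div_le_iff₀ (hb i hi)).mp (h i hi)
  have hslack : m ≤ #s * m := le_mul_of_one_le_left hm (by exact_mod_cast hs.card_pos)
  rw [sum_add_distrib, sum_const, nsmul_eq_mul, ← mul_sum] at hsum
  linarith

lemma le_sum_sub_div_sum_of_forall_le_sub_div {l : ℝ} (hs : s.Nonempty) (hm : 0 ≤ m)
    (hb : ∀ i ∈ s, 0 < b i) (h : ∀ i ∈ s, l ≤ (a i - m) / b i) :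
    l ≤ (∑ i ∈ s, a i - m) / ∑ i ∈ s, b i := by
  have hneg := sum_add_div_sum_le_of_forall_add_div_le (a := fun i => -a i) (u := -l) hs hm hb
    fun i hi => by rw [neg_add_eq_sub, ← neg_sub, neg_div]; exact neg_le_neg (h i hi)
  rw [sum_neg_distrib, neg_add_eq_sub, ← neg_sub, neg_div] at hneg
  exact neg_le_neg_iff.mp hneg

end Mediant

theorem merge_preserves_robust_fairness_general {α H : Type*} [DecidableEq α] [Fintype H]
    (t : ℕ) (ht : 1 ≤ t)
    (C : Fin t → Finset α)
    (hne : ∀ i, (C i).Nonempty)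
    (hdisj : ∀ i j : Fin t, i ≠ j → Disjoint (C i) (C j))
    (Ch : Fin t → H → Finset α)
    (hpart_union : ∀ i, Finset.univ.biUnion (Ch i) = C i)
    (l u : H → ℝ) (mplus mminus : H → ℕ)
    (hub : ∀ i, ∀ h : H, ((Ch i h).card + (mplus h : ℝ)) / (C i).card ≤ u h)
    (hlb : ∀ i, ∀ h : H, l h ≤ ((Ch i h).card - (mminus h : ℝ)) / (C i).card) :
    (∀ h : H,
      (((Finset.univ.biUnion fun i => Ch i h).card : ℝ) + (mplus h : ℝ)) /
        ((Finset.univ.biUnion C).card : ℝ) ≤ u h) ∧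
    (∀ h : H,
      l h ≤ (((Finset.univ.biUnion fun i => Ch i h).card : ℝ) - (mminus h : ℝ)) /
        ((Finset.univ.biUnion C).card : ℝ)) := by
  have hC : ((univ : Finset (Fin t)) : Set (Fin t)).PairwiseDisjoint C :=
    fun i _ j _ hij => hdisj i j hij
  have hsub (h : H) : (fun i => Ch i h) ≤ C := fun i =>
    hpart_union i ▸ subset_biUnion_of_mem (Ch i) (mem_univ h)
  have huniv : (univ : Finset (Fin t)).Nonempty := univ_nonempty_iff.mpr ⟨⟨0, ht⟩⟩
  have hpos (i : Fin t) (_ : i ∈ univ) : (0 : ℝ) < #(C i) := by exact_mod_cast (hne i).card_pos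
  simp only [card_biUnion hC, card_biUnion (hC.mono (hsub _)), Nat.cast_sum]
  exact ⟨fun h => sum_add_div_sum_le_of_forall_add_div_le huniv (Nat.cast_nonneg _) hpos
      fun i _ => hub i h,
    fun h => le_sum_sub_div_sum_of_forall_le_sub_div huniv (Nat.cast_nonneg _) hpos
      fun i _ => hlb i h⟩

theorem merge_preserves_robust_fairness {α H : Type*} [DecidableEq α] [Fintype H]
    (t : ℕ) (ht : 1 ≤ t)
    (C : Fin t → Finset α)
    (hne : ∀ i, (C i).Nonempty)
    (hdisj : ∀ i j : Fin t, i ≠ j → Disjoint (C i) (C j))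
    (Ch : Fin t → H → Finset α)
    (hpart_disj : ∀ i, ∀ g h : H, g ≠ h → Disjoint (Ch i g) (Ch i h))
    (hpart_union : ∀ i, Finset.univ.biUnion (Ch i) = C i)
    (l u : H → ℝ) (mplus mminus : H → ℕ)
    (hub : ∀ i, ∀ h : H, ((Ch i h).card + (mplus h : ℝ)) / (C i).card ≤ u h)
    (hlb : ∀ i, ∀ h : H, l h ≤ ((Ch i h).card - (mminus h : ℝ)) / (C i).card) :
    (∀ h : H,
      (((Finset.univ.biUnion fun i => Ch i h).card : ℝ) + (mplus h : ℝ)) /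
        ((Finset.univ.biUnion C).card : ℝ) ≤ u h) ∧
    (∀ h : H,
      l h ≤ (((Finset.univ.biUnion fun i => Ch i h).card : ℝ) - (mminus h : ℝ)) /
        ((Finset.univ.biUnion C).card : ℝ)) :=
  merge_preserves_robust_fairness_general t ht C hne hdisj Ch hpart_union l u mplus mminus hub hlb
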